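/- For every natural number N ≥ 1 the following identity of rational functions in q holds: ∑_{n=1}^{N} q^n (q^{n+1};q)_{N-n} / (q^{2n};q^2)_{N-n+1} = (1/(q;q)_N) ∑_{n=1}^{N} [N choose n] (-1)^{n-1} n q^{n(n+1)/2}/(1+q^n). -/

import Mathlib

open Finset

/-- q-Pochhammer symbol (a;q)_n = ∏_{k=0}^{n-1} (1 - a q^k). -/
noncomputable def qP (a q : ℂ) (n : ℕ) : ℂ := ∏ k ∈ Finset.range n, (1 - a * q ^ k)

/-- Gaussian (q-)binomial coefficient [N choose n]_q. -/
noncomputable def qBinom (q : ℂ) (N n : ℕ) : ℂ := qP q q N / (qP q q n * qP q q (N - n))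

/-!
Write `L_N` for the left side and `S_N` for the sum on the right, so the claim is
`(q;q)_N L_N = S_N`; both vanish for `N = 0`. Going from `N` to `N + 1` divides every term of
`L_N` by `1 + q^(N+1)` and adds the new term `q^(N+1) / (1 - q^(2N+2))`. On the right, the two
q-Pascal rules turn `(1 + q^(N+1)) S_(N+1) - (1 - q^(N+1)) S_N` termwise into an expression in
which the factor `1 + q^n` of the denominator cancels; the weights `n` then telescope, leaving
`q^(N+1) ∑_j (-1)^j q^(j(j+1)/2) [N choose j] = q^(N+1) (q;q)_N` by Rothe's q-binomial theorem.
These are the same recursion.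
-/

theorem sum_Icc_one_eq_sum_range {M : Type*} [AddCommMonoid M] (f : ℕ → M) (N : ℕ) :
    ∑ n ∈ Icc 1 N, f n = ∑ i ∈ range N, f (i + 1) := by
  rw [range_eq_Ico, sum_Ico_add', zero_add, Ico_add_one_right_eq_Icc]

theorem pow_triangle_succ {M : Type*} [Monoid M] (q : M) (i : ℕ) :
    q ^ ((i + 1) * (i + 1 + 1) / 2) = q ^ (i * (i + 1) / 2) * q ^ (i + 1) := by
  rw [← pow_add, show (i + 1) * (i + 1 + 1) = i * (i + 1) + 2 * (i + 1) by ring,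
    Nat.add_mul_div_left _ _ two_pos]

theorem qP_zero (a q : ℂ) : qP a q 0 = 1 :=
  prod_range_zero _

theorem qP_succ (a q : ℂ) (m : ℕ) : qP a q (m + 1) = qP a q m * (1 - a * q ^ m) :=
  prod_range_succ _ _

theorem qP_self_succ (q : ℂ) (m : ℕ) : qP q q (m + 1) = qP q q m * (1 - q ^ (m + 1)) := by
  rw [qP_succ, pow_succ']

-- Terms of Rothe's q-binomial theorem `∑ j, [N, j] q^(j(j-1)/2) (-x)^j = (x;q)_N` at `x = q`.
noncomputable def rotheTerm (q : ℂ) (N j : ℕ) : ℂ :=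
  (-1) ^ j * q ^ (j * (j + 1) / 2) * qBinom q N j

noncomputable def binomTerm (q : ℂ) (N n : ℕ) : ℂ :=
  qBinom q N n * ((-1) ^ (n - 1) * (n : ℂ) * q ^ (n * (n + 1) / 2) / (1 + q ^ n))

noncomputable def binomSum (q : ℂ) (N : ℕ) : ℂ := ∑ n ∈ Icc 1 N, binomTerm q N n

-- `scSum q N` is the left side, the generating function of self-conjugate `S_N`-partitions.
noncomputable def scTerm (q : ℂ) (N n : ℕ) : ℂ :=
  q ^ n * qP (q ^ (n + 1)) q (N - n) / qP (q ^ (2 * n)) (q ^ 2) (N - n + 1)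

noncomputable def scSum (q : ℂ) (N : ℕ) : ℂ := ∑ n ∈ Icc 1 N, scTerm q N n

section NotRootOfUnity

variable {q : ℂ} (hq : ¬IsOfFinOrder q)
include hq

theorem one_sub_pow_ne_zero_of_not_isOfFinOrder {m : ℕ} (hm : m ≠ 0) : 1 - q ^ m ≠ 0 :=
  sub_ne_zero.2 fun h => hq (isOfFinOrder_iff_pow_eq_one.2 ⟨m, Nat.pos_of_ne_zero hm, h.symm⟩)

theorem one_add_pow_ne_zero_of_not_isOfFinOrder {m : ℕ} (hm : m ≠ 0) : 1 + q ^ m ≠ 0 := by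
  refine right_ne_zero_of_mul (a := 1 - q ^ m) ?_
  rw [show (1 - q ^ m) * (1 + q ^ m) = 1 - q ^ (2 * m) by ring]
  exact one_sub_pow_ne_zero_of_not_isOfFinOrder hq (by omega)

theorem qP_self_ne_zero (m : ℕ) : qP q q m ≠ 0 := by
  refine prod_ne_zero_iff.2 fun k _ => ?_
  rw [← pow_succ']
  exact one_sub_pow_ne_zero_of_not_isOfFinOrder hq k.add_one_ne_zero

theorem qBinom_zero_right (N : ℕ) : qBinom q N 0 = 1 := by
  rw [qBinom, Nat.sub_zero, qP_zero, one_mul, div_self (qP_self_ne_zero hq N)]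

theorem qBinom_self (N : ℕ) : qBinom q N N = 1 := by
  rw [qBinom, Nat.sub_self, qP_zero, mul_one, div_self (qP_self_ne_zero hq N)]

theorem qBinom_succ_succ_mul (N i : ℕ) :
    qBinom q (N + 1) (i + 1) * (1 - q ^ (i + 1)) = (1 - q ^ (N + 1)) * qBinom q N i := by
  have := one_sub_pow_ne_zero_of_not_isOfFinOrder hq i.add_one_ne_zero
  simp only [qBinom, Nat.add_sub_add_right, qP_self_succ]
  field_simp [qP_self_ne_zero hq]

theorem qBinom_succ_mul {N i : ℕ} (h : i < N) :
    qBinom q N (i + 1) * (1 - q ^ (i + 1)) = qBinom q N i * (1 - q ^ (N - i)) := by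
  obtain ⟨k, rfl⟩ := Nat.exists_eq_add_of_lt h
  have := one_sub_pow_ne_zero_of_not_isOfFinOrder hq i.add_one_ne_zero
  have := one_sub_pow_ne_zero_of_not_isOfFinOrder hq k.add_one_ne_zero
  rw [qBinom, qBinom, show i + k + 1 - (i + 1) = k by omega, show i + k + 1 - i = k + 1 by omega]
  simp only [qP_self_succ]
  field_simp [qP_self_ne_zero hq]

theorem qBinom_succ_succ {N i : ℕ} (h : i < N) :
    qBinom q (N + 1) (i + 1) = qBinom q N (i + 1) + q ^ (N - i) * qBinom q N i := by
  refine mul_right_cancel₀ (one_sub_pow_ne_zero_of_not_isOfFinOrder hq i.add_one_ne_zero) ?_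
  have hpow : q ^ (N + 1) = q ^ (i + 1) * q ^ (N - i) := by rw [← pow_add]; congr 1; omega
  linear_combination qBinom_succ_succ_mul hq N i - qBinom_succ_mul hq h - qBinom q N i * hpow

theorem qBinom_succ_succ' {N i : ℕ} (h : i < N) :
    qBinom q (N + 1) (i + 1) = q ^ (i + 1) * qBinom q N (i + 1) + qBinom q N i := by
  linear_combination qBinom_succ_succ hq h + qBinom_succ_mul hq h

theorem rotheTerm_succ_succ {N i : ℕ} (h : i < N) :
    rotheTerm q (N + 1) (i + 1) = rotheTerm q N (i + 1) - q ^ (N + 1) * rotheTerm q N i := by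
  have hpow : q ^ (i + 1) * q ^ (N - i) = q ^ (N + 1) := by rw [← pow_add]; congr 1; omega
  simp only [rotheTerm, qBinom_succ_succ hq h, pow_triangle_succ, pow_succ (-1 : ℂ)]
  linear_combination -(-1 : ℂ) ^ i * q ^ (i * (i + 1) / 2) * qBinom q N i * hpow

theorem sum_rotheTerm (N : ℕ) : ∑ j ∈ range (N + 1), rotheTerm q N j = qP q q N := by
  induction N with
  | zero => simp [rotheTerm, qBinom_zero_right hq, qP_zero]
  | succ N ih =>
    have hfirst (M : ℕ) : rotheTerm q M 0 = 1 := by simp [rotheTerm, qBinom_zero_right hq]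
    have hlast : rotheTerm q (N + 1) (N + 1) = -q ^ (N + 1) * rotheTerm q N N := by
      simp only [rotheTerm, qBinom_self hq, pow_triangle_succ, pow_succ (-1 : ℂ)]
      ring
    have hdrop := sum_range_succ' (rotheTerm q N) N
    have htake := sum_range_succ (rotheTerm q N) N
    rw [sum_range_succ, sum_range_succ', sum_congr rfl fun i hi => rotheTerm_succ_succ hq
      (mem_range.1 hi), sum_sub_distrib, ← mul_sum, hlast, qP_self_succ, ← ih]
    linear_combination -hdrop + q ^ (N + 1) * htake + hfirst (N + 1) - hfirst N

theorem binomTerm_succ_succ {N i : ℕ} (h : i < N) :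
    (1 + q ^ (N + 1)) * binomTerm q (N + 1) (i + 1) - (1 - q ^ (N + 1)) * binomTerm q N (i + 1) =
      q ^ (N + 1) *
        (rotheTerm q N i + (i * rotheTerm q N i - (i + 1) * rotheTerm q N (i + 1))) := by
  have hpow : q ^ (i + 1) * q ^ (N - i) = q ^ (N + 1) := by rw [← pow_add]; congr 1; omega
  have hpascal : (1 + q ^ (N + 1)) * qBinom q (N + 1) (i + 1) - (1 - q ^ (N + 1)) * qBinom q N (i + 1)
      = (1 + q ^ (i + 1)) * (q ^ (N - i) * qBinom q N i + q ^ (N + 1) * qBinom q N (i + 1)) := by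
    linear_combination qBinom_succ_succ hq h + q ^ (N + 1) * qBinom_succ_succ' hq h
      - qBinom q N i * hpow
  set w : ℂ := (-1) ^ i * (i + 1) * q ^ ((i + 1) * (i + 1 + 1) / 2)
  have hterm (M : ℕ) : binomTerm q M (i + 1) = qBinom q M (i + 1) * w / (1 + q ^ (i + 1)) := by
    simp only [binomTerm, Nat.add_sub_cancel, w]
    push_cast
    ring
  have := one_add_pow_ne_zero_of_not_isOfFinOrder hq i.add_one_ne_zero
  calc _ = ((1 + q ^ (N + 1)) * qBinom q (N + 1) (i + 1) - (1 - q ^ (N + 1)) * qBinom q N (i + 1))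
        * w / (1 + q ^ (i + 1)) := by rw [hterm, hterm]; ring
    _ = (q ^ (N - i) * qBinom q N i + q ^ (N + 1) * qBinom q N (i + 1)) * w := by
        rw [hpascal]; field_simp
    _ = _ := by
        simp only [w, rotheTerm, pow_triangle_succ, pow_succ (-1 : ℂ)]
        linear_combination (-1 : ℂ) ^ i * (i + 1) * q ^ (i * (i + 1) / 2) * qBinom q N i * hpow

theorem binomTerm_self_succ (N : ℕ) :
    (1 + q ^ (N + 1)) * binomTerm q (N + 1) (N + 1) =
      q ^ (N + 1) * ((N + 1) * rotheTerm q N N) := by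
  have := one_add_pow_ne_zero_of_not_isOfFinOrder hq N.add_one_ne_zero
  simp only [binomTerm, rotheTerm, qBinom_self hq, Nat.add_sub_cancel, pow_triangle_succ]
  push_cast
  field_simp

theorem binomSum_succ (N : ℕ) :
    (1 + q ^ (N + 1)) * binomSum q (N + 1) =
      (1 - q ^ (N + 1)) * binomSum q N + q ^ (N + 1) * qP q q N := by
  have htele : ∑ i ∈ range N, ((1 + q ^ (N + 1)) * binomTerm q (N + 1) (i + 1)
      - (1 - q ^ (N + 1)) * binomTerm q N (i + 1))
      = q ^ (N + 1) * (∑ i ∈ range N, rotheTerm q N i - N * rotheTerm q N N) := by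
    have hsub := sum_range_sub' (fun i : ℕ => (i : ℂ) * rotheTerm q N i) N
    push_cast at hsub
    rw [sum_congr rfl fun i hi => binomTerm_succ_succ hq (mem_range.1 hi), ← mul_sum,
      sum_add_distrib, hsub]
    ring
  have htake := sum_range_succ (rotheTerm q N) N
  rw [sum_rotheTerm hq] at htake
  rw [sum_sub_distrib, ← mul_sum, ← mul_sum] at htele
  rw [binomSum, binomSum, sum_Icc_one_eq_sum_range, sum_Icc_one_eq_sum_range, sum_range_succ,
    mul_add, binomTerm_self_succ hq]
  linear_combination htele - q ^ (N + 1) * htake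

theorem scTerm_succ {N n : ℕ} (h : n ≤ N) :
    scTerm q (N + 1) n * (1 + q ^ (N + 1)) = scTerm q N n := by
  obtain ⟨k, rfl⟩ := Nat.exists_eq_add_of_le h
  have hne : (1 - q ^ (n + k + 1)) * (1 + q ^ (n + k + 1)) ≠ 0 := by
    rw [show (1 - q ^ (n + k + 1)) * (1 + q ^ (n + k + 1)) = 1 - q ^ (2 * (n + k + 1)) by ring]
    exact one_sub_pow_ne_zero_of_not_isOfFinOrder hq (by omega)
  have hnum : q ^ (n + 1) * q ^ k = q ^ (n + k + 1) := by rw [← pow_add]; ring_nf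
  have hden :
      q ^ (2 * n) * (q ^ 2) ^ (k + 1) = 1 - (1 - q ^ (n + k + 1)) * (1 + q ^ (n + k + 1)) := by
    rw [← pow_mul, ← pow_add]; ring_nf
  rw [scTerm, scTerm, show n + k + 1 - n = k + 1 by omega, Nat.add_sub_cancel_left, qP_succ,
    qP_succ, hnum, hden, sub_sub_cancel, ← mul_div_mul_right (q ^ n * qP (q ^ (n + 1)) q k) _ hne]
  ring

theorem scTerm_self_succ (N : ℕ) :
    scTerm q (N + 1) (N + 1) * (1 + q ^ (N + 1)) = q ^ (N + 1) / (1 - q ^ (N + 1)) := by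
  have := one_sub_pow_ne_zero_of_not_isOfFinOrder hq N.add_one_ne_zero
  have := one_add_pow_ne_zero_of_not_isOfFinOrder hq N.add_one_ne_zero
  simp only [scTerm, Nat.sub_self, zero_add, qP, prod_range_zero, prod_range_one, pow_zero, mul_one]
  rw [show 1 - q ^ (2 * (N + 1)) = (1 - q ^ (N + 1)) * (1 + q ^ (N + 1)) by ring]
  field_simp

theorem scSum_succ (N : ℕ) :
    scSum q (N + 1) * (1 + q ^ (N + 1)) = scSum q N + q ^ (N + 1) / (1 - q ^ (N + 1)) := by
  rw [scSum, scSum, sum_Icc_succ_top (by omega), add_mul, sum_mul, scTerm_self_succ hq]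
  congr 1
  exact sum_congr rfl fun n hn => scTerm_succ hq (mem_Icc.1 hn).2

theorem scSum_eq_binomSum_div (N : ℕ) : scSum q N = binomSum q N / qP q q N := by
  induction N with
  | zero => simp [scSum, binomSum]
  | succ N ih =>
    have := one_sub_pow_ne_zero_of_not_isOfFinOrder hq N.add_one_ne_zero
    have hplus := one_add_pow_ne_zero_of_not_isOfFinOrder hq N.add_one_ne_zero
    have := qP_self_ne_zero hq N
    refine mul_right_cancel₀ hplus ?_
    rw [scSum_succ hq, ih, qP_self_succ]
    field_simp
    linear_combination -binomSum_succ hq N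

end NotRootOfUnity

theorem stmt_9_general (N : ℕ) (q : ℂ) (hq : ‖q‖ < 1) :
    ∑ n ∈ Finset.Icc 1 N, q ^ n * qP (q ^ (n + 1)) q (N - n) / qP (q ^ (2 * n)) (q ^ 2) (N - n + 1) =
      (1 / qP q q N) * ∑ n ∈ Finset.Icc 1 N,
        qBinom q N n * ((-1) ^ (n - 1) * (n : ℂ) * q ^ (n * (n + 1) / 2) / (1 + q ^ n)) := by
  rw [one_div_mul_eq_div]
  exact scSum_eq_binomSum_div (fun h => hq.ne h.norm_eq_one) N

/-- Generating function of N_SC(n,N): two representations. -/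
theorem stmt_9 (N : ℕ) (hN : 1 ≤ N) (q : ℂ) (hq : ‖q‖ < 1) :
    ∑ n ∈ Finset.Icc 1 N, q ^ n * qP (q ^ (n + 1)) q (N - n) / qP (q ^ (2 * n)) (q ^ 2) (N - n + 1) =
      (1 / qP q q N) * ∑ n ∈ Finset.Icc 1 N,
        qBinom q N n * ((-1) ^ (n - 1) * (n : ℂ) * q ^ (n * (n + 1) / 2) / (1 + q ^ n)) :=
  stmt_9_general N q hq
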